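/- A Defender mixed strategy ρ* is a Nash-equilibrium strategy of the zero-sum malware detection game Γ₀ (i.e. there exists μ* with (ρ*,μ*) a mixed Nash equilibrium of Γ₀) if and only if ρ* is a Nash-equilibrium strategy of the non-zero-sum game Γ, if and only if ρ* is a maximin strategy of the Defender, if and only if ρ* is a Strong Stackelberg Equilibrium strategy of the Defender in Γ. Hence the Defender plays optimally by choosing any Nash-equilibrium strategy of Γ₀, regardless of whether the game is zero-sum or non-zero-sum and regardless of whether it is a Nash (simultaneous-move) or Stackelberg (leader–follower) game. -/

import Mathlib

open Finset Set

/-- Expected security damage bilinear form `S(ρ,μ) = Σ_{j,l} ρ j · μ l · S j l`. -/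
def Sbil {R M : ℕ} (S : Fin R → Fin M → ℝ) (ρ : Fin R → ℝ) (μ : Fin M → ℝ) : ℝ :=
  ∑ j, ∑ l, ρ j * μ l * S j l

/-- Expected inspection cost `k(ρ) = Σ_j ρ j · C j`. -/
def kcost {R : ℕ} (C : Fin R → ℝ) (ρ : Fin R → ℝ) : ℝ :=
  ∑ j, ρ j * C j

/-- Defender expected utility `U_d(ρ,μ) = -S(ρ,μ) - k(ρ)` (same in `Γ₀` and `Γ`). -/
def Ud {R M : ℕ} (S : Fin R → Fin M → ℝ) (C : Fin R → ℝ) (ρ : Fin R → ℝ)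
    (μ : Fin M → ℝ) : ℝ :=
  -Sbil S ρ μ - kcost C ρ

/-- Mixed Nash equilibrium of the zero-sum game `Γ₀`, where the Attacker's
utility is `U_a^{Γ₀}(ρ,μ) = -U_d(ρ,μ)`. -/
def NEzero {R M : ℕ} (S : Fin R → Fin M → ℝ) (C : Fin R → ℝ) (ρs : Fin R → ℝ)
    (μs : Fin M → ℝ) : Prop :=
  ρs ∈ stdSimplex ℝ (Fin R) ∧ μs ∈ stdSimplex ℝ (Fin M) ∧
  (∀ ρ ∈ stdSimplex ℝ (Fin R), Ud S C ρs μs ≥ Ud S C ρ μs) ∧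
  (∀ μ ∈ stdSimplex ℝ (Fin M), -Ud S C ρs μs ≥ -Ud S C ρs μ)

/-- Mixed Nash equilibrium of the non-zero-sum game `Γ`, where the Attacker's
utility is `U_a^{Γ}(ρ,μ) = Ξ·S(ρ,μ)`. -/
def NEgame {R M : ℕ} (S : Fin R → Fin M → ℝ) (C : Fin R → ℝ) (Ξ : ℝ)
    (ρs : Fin R → ℝ) (μs : Fin M → ℝ) : Prop :=
  ρs ∈ stdSimplex ℝ (Fin R) ∧ μs ∈ stdSimplex ℝ (Fin M) ∧
  (∀ ρ ∈ stdSimplex ℝ (Fin R), Ud S C ρs μs ≥ Ud S C ρ μs) ∧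
  (∀ μ ∈ stdSimplex ℝ (Fin M), Ξ * Sbil S ρs μs ≥ Ξ * Sbil S ρs μ)

/-- Maximin strategy of the Defender. -/
def Maximin {R M : ℕ} (S : Fin R → Fin M → ℝ) (C : Fin R → ℝ)
    (ρd : Fin R → ℝ) : Prop :=
  ρd ∈ stdSimplex ℝ (Fin R) ∧
  ∀ ρ ∈ stdSimplex ℝ (Fin R),
    sInf ((Ud S C ρd) '' stdSimplex ℝ (Fin M)) ≥
      sInf ((Ud S C ρ) '' stdSimplex ℝ (Fin M))

/-- The Attacker's best-response set to `ρ` in the non-zero-sum game `Γ`. -/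
def BRset {R M : ℕ} (S : Fin R → Fin M → ℝ) (Ξ : ℝ) (ρ : Fin R → ℝ) :
    Set (Fin M → ℝ) :=
  {μ | μ ∈ stdSimplex ℝ (Fin M) ∧
    ∀ μ' ∈ stdSimplex ℝ (Fin M), Ξ * Sbil S ρ μ ≥ Ξ * Sbil S ρ μ'}

/-- Strong Stackelberg Equilibrium strategy of the Defender in `Γ`. -/
def SSEstrat {R M : ℕ} (S : Fin R → Fin M → ℝ) (C : Fin R → ℝ) (Ξ : ℝ)
    (ρs : Fin R → ℝ) : Prop :=
  ρs ∈ stdSimplex ℝ (Fin R) ∧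
  ∀ ρ ∈ stdSimplex ℝ (Fin R),
    sSup ((Ud S C ρs) '' BRset S Ξ ρs) ≥ sSup ((Ud S C ρ) '' BRset S Ξ ρ)

/-!
Against a fixed `ρ`, the Attacker's utility in `Γ` is a positive multiple of `S(ρ,μ)`, while
`U_d(ρ,μ) = -S(ρ,μ) - k(ρ)` with `k(ρ)` independent of `μ`. Hence in both games the Attacker's
best responses to `ρ` are exactly the minimisers of `U_d(ρ,·)` on the simplex: the Nash equilibria
of `Γ₀` and `Γ` coincide, and the Stackelberg payoff of `ρ` is its security level
`inf_μ U_d(ρ,μ)`. A Nash strategy is maximin because the equilibrium payoff is both its own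
security level and an upper bound for `U_d(ρ,μ*)`. Conversely, `U_d` is affine in each variable,
so Sion's minimax theorem gives a saddle point `(ρ₀,μ₀)`; a maximin `ρ*` guarantees at least the
value `U_d(ρ₀,μ₀)`, which makes `(ρ*,μ₀)` a Nash equilibrium.
-/

open Matrix

lemma IsMinOn.sSup_image_minimizers_eq_sInf {α β : Type*} [ConditionallyCompleteLinearOrder β]
    {s : Set α} {f : α → β} {a : α} (ha : a ∈ s) (hmin : IsMinOn f s a) :
    sSup (f '' {x | x ∈ s ∧ IsMinOn f s x}) = sInf (f '' s) := by
  have himage : f '' {x | x ∈ s ∧ IsMinOn f s x} = {f a} := by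
    ext y
    constructor
    · rintro ⟨x, ⟨hx, hxmin⟩, rfl⟩
      exact le_antisymm (hxmin ha) (hmin hx)
    · rintro rfl
      exact ⟨a, ⟨ha, hmin⟩, rfl⟩
  rw [himage, csSup_singleton]
  exact ((hmin.isGLB ha).csInf_eq ⟨f a, a, ha, rfl⟩).symm

section Game

variable {R M : ℕ} {S : Fin R → Fin M → ℝ} {C : Fin R → ℝ} {Ξ : ℝ}

lemma Ud_eq_dotProduct (ρ : Fin R → ℝ) (μ : Fin M → ℝ) :
    Ud S C ρ μ = -(ρ ⬝ᵥ (Matrix.of S *ᵥ μ)) - ρ ⬝ᵥ C := by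
  simp [Ud, Sbil, kcost, dotProduct, mulVec, Finset.mul_sum, mul_assoc, mul_comm (μ _)]

lemma Ud_smul_add_smul_left (a b : ℝ) (ρ ρ' : Fin R → ℝ) (μ : Fin M → ℝ) :
    Ud S C (a • ρ + b • ρ') μ = a * Ud S C ρ μ + b * Ud S C ρ' μ := by
  simp only [Ud_eq_dotProduct, add_dotProduct, smul_dotProduct, smul_eq_mul]
  ring

lemma Ud_smul_add_smul_right {a b : ℝ} (hab : a + b = 1) (ρ : Fin R → ℝ) (μ μ' : Fin M → ℝ) :
    Ud S C ρ (a • μ + b • μ') = a * Ud S C ρ μ + b * Ud S C ρ μ' := by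
  simp only [Ud_eq_dotProduct, mulVec_add, mulVec_smul, dotProduct_add, dotProduct_smul,
    smul_eq_mul]
  linear_combination (ρ ⬝ᵥ C) * hab

lemma concaveOn_Ud_left (μ : Fin M → ℝ) :
    ConcaveOn ℝ (stdSimplex ℝ (Fin R)) (fun ρ => Ud S C ρ μ) :=
  ⟨convex_stdSimplex ℝ _, fun ρ _ ρ' _ _ _ _ _ _ => (Ud_smul_add_smul_left _ _ ρ ρ' μ).ge⟩

lemma convexOn_Ud_right (ρ : Fin R → ℝ) :
    ConvexOn ℝ (stdSimplex ℝ (Fin M)) (Ud S C ρ) :=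
  ⟨convex_stdSimplex ℝ _, fun μ _ μ' _ _ _ _ _ hab => (Ud_smul_add_smul_right hab ρ μ μ').le⟩

lemma continuous_Ud_left (μ : Fin M → ℝ) : Continuous fun ρ => Ud S C ρ μ := by
  unfold Ud Sbil kcost
  fun_prop

lemma continuous_Ud_right (ρ : Fin R → ℝ) : Continuous (Ud S C ρ) := by
  unfold Ud Sbil kcost
  fun_prop

lemma exists_isSaddlePointOn_Ud (hR : (stdSimplex ℝ (Fin R)).Nonempty)
    (hM : (stdSimplex ℝ (Fin M)).Nonempty) :
    ∃ μ₀ ∈ stdSimplex ℝ (Fin M), ∃ ρ₀ ∈ stdSimplex ℝ (Fin R),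
      IsSaddlePointOn (stdSimplex ℝ (Fin M)) (stdSimplex ℝ (Fin R))
        (fun μ ρ => Ud S C ρ μ) μ₀ ρ₀ :=
  Sion.exists_isSaddlePointOn hM (convex_stdSimplex ℝ _) (isCompact_stdSimplex ℝ _)
    (fun ρ _ => (continuous_Ud_right ρ).lowerSemicontinuous.lowerSemicontinuousOn _)
    (fun ρ _ => (convexOn_Ud_right ρ).quasiconvexOn)
    (convex_stdSimplex ℝ _) hR (isCompact_stdSimplex ℝ _)
    (fun μ _ => (continuous_Ud_left μ).upperSemicontinuous.upperSemicontinuousOn _)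
    (fun μ _ => (concaveOn_Ud_left μ).quasiconcaveOn)

lemma sInf_Ud_le (ρ : Fin R → ℝ) {μ : Fin M → ℝ} (hμ : μ ∈ stdSimplex ℝ (Fin M)) :
    sInf (Ud S C ρ '' stdSimplex ℝ (Fin M)) ≤ Ud S C ρ μ :=
  csInf_le ((isCompact_stdSimplex ℝ _).bddBelow_image (continuous_Ud_right ρ).continuousOn)
    (Set.mem_image_of_mem _ hμ)

lemma le_sInf_Ud {ρ : Fin R → ℝ} {v : ℝ} (hM : (stdSimplex ℝ (Fin M)).Nonempty)
    (h : ∀ μ ∈ stdSimplex ℝ (Fin M), v ≤ Ud S C ρ μ) :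
    v ≤ sInf (Ud S C ρ '' stdSimplex ℝ (Fin M)) :=
  le_csInf (hM.image _) (Set.forall_mem_image.2 h)

variable (C) in
lemma mul_Sbil_le_mul_Sbil_iff (hΞ : 0 < Ξ) {ρ : Fin R → ℝ} {μ μ' : Fin M → ℝ} :
    Ξ * Sbil S ρ μ' ≤ Ξ * Sbil S ρ μ ↔ Ud S C ρ μ ≤ Ud S C ρ μ' := by
  rw [mul_le_mul_iff_right₀ hΞ, Ud, Ud]
  constructor <;> intro h <;> linarith

lemma NEzero_iff_NEgame (hΞ : 0 < Ξ) {ρs : Fin R → ℝ} {μs : Fin M → ℝ} :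
    NEzero S C ρs μs ↔ NEgame S C Ξ ρs μs := by
  simp only [NEzero, NEgame, ge_iff_le, neg_le_neg_iff, mul_Sbil_le_mul_Sbil_iff C hΞ]

lemma Maximin.of_NEgame (hΞ : 0 < Ξ) {ρs : Fin R → ℝ} {μs : Fin M → ℝ}
    (h : NEgame S C Ξ ρs μs) : Maximin S C ρs := by
  obtain ⟨hρs, hμs, hdef, hatt⟩ := h
  have hval : Ud S C ρs μs ≤ sInf (Ud S C ρs '' stdSimplex ℝ (Fin M)) :=
    le_sInf_Ud ⟨μs, hμs⟩ fun μ hμ => (mul_Sbil_le_mul_Sbil_iff C hΞ).1 (hatt μ hμ)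
  exact ⟨hρs, fun ρ hρ => (sInf_Ud_le ρ hμs).trans ((hdef ρ hρ).trans hval)⟩

lemma Maximin.exists_NEgame (hM : (stdSimplex ℝ (Fin M)).Nonempty) (hΞ : 0 < Ξ)
    {ρs : Fin R → ℝ} (h : Maximin S C ρs) : ∃ μs, NEgame S C Ξ ρs μs := by
  obtain ⟨hρs, hmax⟩ := h
  obtain ⟨μ₀, hμ₀, ρ₀, hρ₀, hsaddle⟩ := exists_isSaddlePointOn_Ud (S := S) (C := C) ⟨ρs, hρs⟩ hM
  have hval : Ud S C ρ₀ μ₀ ≤ sInf (Ud S C ρs '' stdSimplex ℝ (Fin M)) :=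
    (le_sInf_Ud hM fun μ hμ => hsaddle μ hμ ρ₀ hρ₀).trans (hmax ρ₀ hρ₀)
  refine ⟨μ₀, hρs, hμ₀, fun ρ hρ => ?_, fun μ hμ => ?_⟩
  · exact (hsaddle μ₀ hμ₀ ρ hρ).trans (hval.trans (sInf_Ud_le ρs hμ₀))
  · rw [ge_iff_le, mul_Sbil_le_mul_Sbil_iff C hΞ]
    exact (hsaddle μ₀ hμ₀ ρs hρs).trans (hval.trans (sInf_Ud_le ρs hμ))

variable (C) in
lemma BRset_eq_setOf_isMinOn (hΞ : 0 < Ξ) (ρ : Fin R → ℝ) :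
    BRset S Ξ ρ =
      {μ | μ ∈ stdSimplex ℝ (Fin M) ∧ IsMinOn (Ud S C ρ) (stdSimplex ℝ (Fin M)) μ} := by
  ext μ
  simp only [BRset, Set.mem_ofPred_eq, isMinOn_iff, ge_iff_le, mul_Sbil_le_mul_Sbil_iff C hΞ]

lemma sSup_Ud_BRset (hM : (stdSimplex ℝ (Fin M)).Nonempty) (hΞ : 0 < Ξ) (ρ : Fin R → ℝ) :
    sSup (Ud S C ρ '' BRset S Ξ ρ) = sInf (Ud S C ρ '' stdSimplex ℝ (Fin M)) := by
  obtain ⟨μ₀, hμ₀, hmin⟩ :=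
    (isCompact_stdSimplex ℝ _).exists_isMinOn hM (continuous_Ud_right ρ).continuousOn
  rw [BRset_eq_setOf_isMinOn C hΞ, hmin.sSup_image_minimizers_eq_sInf hμ₀]

lemma maximin_iff_SSEstrat (hM : (stdSimplex ℝ (Fin M)).Nonempty) (hΞ : 0 < Ξ)
    {ρs : Fin R → ℝ} : Maximin S C ρs ↔ SSEstrat S C Ξ ρs := by
  simp only [Maximin, SSEstrat, sSup_Ud_BRset hM hΞ]

end Game

theorem stmt7_general {R M : ℕ} (hM : 0 < M)
    (S : Fin R → Fin M → ℝ)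
    (C : Fin R → ℝ)
    (Ξ : ℝ) (hΞ : 0 < Ξ)
    (ρs : Fin R → ℝ) :
    ((∃ μs, NEzero S C ρs μs) ↔ (∃ μs, NEgame S C Ξ ρs μs)) ∧
    ((∃ μs, NEgame S C Ξ ρs μs) ↔ Maximin S C ρs) ∧
    (Maximin S C ρs ↔ SSEstrat S C Ξ ρs) := by
  have hΔM : (stdSimplex ℝ (Fin M)).Nonempty := ⟨_, single_mem_stdSimplex ℝ ⟨0, hM⟩⟩
  exact ⟨exists_congr fun _ => NEzero_iff_NEgame hΞ,
    ⟨fun ⟨_, h⟩ => Maximin.of_NEgame hΞ h, Maximin.exists_NEgame hΔM hΞ⟩,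
    maximin_iff_SSEstrat hΔM hΞ⟩

/-- a Defender strategy is a Nash-equilibrium strategy of the
zero-sum game `Γ₀` iff it is a Nash-equilibrium strategy of the non-zero-sum
game `Γ`, iff it is a maximin strategy, iff it is a Strong Stackelberg
Equilibrium strategy of `Γ`. -/
theorem stmt7 {R M : ℕ} (hR : 0 < R) (hM : 0 < M)
    (S : Fin R → Fin M → ℝ) (hS : ∀ j l, 0 ≤ S j l)
    (C : Fin R → ℝ) (hC : ∀ j, 0 ≤ C j)
    (Ξ : ℝ) (hΞ : 0 < Ξ)
    (ρs : Fin R → ℝ) :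
    ((∃ μs, NEzero S C ρs μs) ↔ (∃ μs, NEgame S C Ξ ρs μs)) ∧
    ((∃ μs, NEgame S C Ξ ρs μs) ↔ Maximin S C ρs) ∧
    (Maximin S C ρs ↔ SSEstrat S C Ξ ρs) :=
  stmt7_general hM S C Ξ hΞ ρs
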